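/- arXiv:2102.02213 — 3 statements merged into one kernel-verified Lean document; each statement's English description precedes it below -/
import Mathlib

section
/- Discrete Nash–Sobolev inequality (Lemma 3.1): there exists a universal constant C > 0 such that for every function φ : ℤ → ℂ with Σ_{x∈ℤ} |φ(x)| < ∞, one has Σ_{x∈ℤ} |φ(x)|² ≤ C · (Σ_{x∈ℤ} |φ(x)|)^(4/3) · (Σ_{x∈ℤ} |φ(x+1) − φ(x)|²)^(1/3). -/
/-!
With `a = ‖φ‖`, telescoping `a²` from `x` to `+∞` bounds `a x ^ 2` by
`∑ |a (y+1)² - a y²| ≤ ∑ (a (y+1) + a y) ‖φ (y+1) - φ y‖`, which Cauchy–Schwarz bounds by `2 √S √B`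
with `S = ∑ a²`, `B = ∑ ‖φ (y+1) - φ y‖²`. Hence `S ≤ (sup a) ∑ a` gives `S² ≤ 2 √S √B A²` with
`A = ∑ a`, i.e. `S³ ≤ 4 A⁴ B`, and the constant is `4^{1/3} ≤ 2`.
-/

open Filter Finset Topology

theorem Summable.sq_of_nonneg {ι : Type*} {f : ι → ℝ} (hf : Summable f) (hf0 : ∀ i, 0 ≤ f i) :
    Summable fun i => f i ^ 2 :=
  (hf.mul_left (∑' i, f i)).of_nonneg_of_le (fun i => sq_nonneg _) fun i => by
    rw [sq]; exact mul_le_mul_of_nonneg_right (hf.le_tsum i fun j _ => hf0 j) (hf0 i)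

theorem tsum_sq_le_mul_tsum_of_le {ι : Type*} {f : ι → ℝ} (hf : Summable f) (hf0 : ∀ i, 0 ≤ f i)
    {m : ℝ} (hm : ∀ i, f i ≤ m) : ∑' i, f i ^ 2 ≤ m * ∑' i, f i := by
  rw [← tsum_mul_left]
  refine (hf.sq_of_nonneg hf0).tsum_le_tsum (fun i => ?_) (hf.mul_left m)
  rw [sq]; exact mul_le_mul_of_nonneg_right (hm i) (hf0 i)

theorem summable_and_tsum_mul_le_sqrt_mul_sqrt {ι : Type*} {f g : ι → ℝ} (hf : ∀ i, 0 ≤ f i)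
    (hg : ∀ i, 0 ≤ g i) (hf2 : Summable fun i => f i ^ 2) (hg2 : Summable fun i => g i ^ 2) :
    (Summable fun i => f i * g i) ∧
      ∑' i, f i * g i ≤ √(∑' i, f i ^ 2) * √(∑' i, g i ^ 2) := by
  simp_rw [← Real.rpow_natCast _ 2, Nat.cast_ofNat] at hf2 hg2 ⊢
  simpa [Real.sqrt_eq_rpow] using
    Real.summable_and_inner_le_Lp_mul_Lq_tsum_of_nonneg .two_two hf hg hf2 hg2

theorem le_two_mul_rpow_of_pow_three_le {S A B : ℝ} (hA : 0 ≤ A) (hB : 0 ≤ B)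
    (h : S ^ 3 ≤ 4 * A ^ 4 * B) : S ≤ 2 * A ^ ((4 : ℝ) / 3) * B ^ ((1 : ℝ) / 3) := by
  have hcube : (2 * A ^ ((4 : ℝ) / 3) * B ^ ((1 : ℝ) / 3)) ^ 3 = 8 * A ^ 4 * B := by
    rw [mul_pow, mul_pow, ← Real.rpow_mul_natCast hA, ← Real.rpow_mul_natCast hB]
    norm_num
  refine le_of_pow_le_pow_left₀ three_ne_zero (by positivity) ?_
  rw [hcube]
  nlinarith [mul_nonneg (pow_nonneg hA 4) hB]

theorem le_two_mul_rpow_of_sq_le {S A B : ℝ} (hS : 0 ≤ S) (hA : 0 ≤ A) (hB : 0 ≤ B)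
    (h : S ^ 2 ≤ 2 * √S * √B * A ^ 2) : S ≤ 2 * A ^ ((4 : ℝ) / 3) * B ^ ((1 : ℝ) / 3) := by
  refine le_two_mul_rpow_of_pow_three_le hA hB ?_
  rcases hS.eq_or_lt with rfl | hS
  · rw [zero_pow three_ne_zero]; positivity
  have h4 : S * S ^ 3 ≤ S * (4 * A ^ 4 * B) := calc
    S * S ^ 3 = (S ^ 2) ^ 2 := by ring
    _ ≤ (2 * √S * √B * A ^ 2) ^ 2 := by gcongr
    _ = S * (4 * A ^ 4 * B) := by
      rw [mul_pow, mul_pow, mul_pow, Real.sq_sqrt hS.le, Real.sq_sqrt hB]; ring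
  exact le_of_mul_le_mul_left h4 hS

section NashSobolev

variable {E : Type*} [SeminormedAddCommGroup E] {φ : ℤ → E}

theorem norm_le_tsum_norm_sub_of_tendsto_atTop {f : ℤ → E} (hf : Tendsto f atTop (𝓝 0))
    (hd : Summable fun y => ‖f (y + 1) - f y‖) (x : ℤ) :
    ‖f x‖ ≤ ∑' y, ‖f (y + 1) - f y‖ := by
  set T := ∑' y, ‖f (y + 1) - f y‖
  have hshift : Function.Injective fun i : ℕ => x + i := fun i j h => by simpa using h
  have hn : ∀ n : ℕ, ‖f x‖ ≤ ‖f (x + n)‖ + T := fun n => by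
    have htel : f (x + n) - f x = ∑ i ∈ range n, (f (x + i + 1) - f (x + i)) := by
      simpa [add_assoc] using (sum_range_sub (fun i : ℕ => f (x + i)) n).symm
    calc ‖f x‖ ≤ ‖f (x + n)‖ + ‖f (x + n) - f x‖ := norm_le_norm_add_norm_sub _ _
      _ ≤ ‖f (x + n)‖ + ∑ i ∈ range n, ‖f (x + i + 1) - f (x + i)‖ := by
        rw [htel]; gcongr; exact norm_sum_le _ _
      _ ≤ ‖f (x + n)‖ + T := by
        gcongr
        exact ((hd.comp_injective hshift).sum_le_tsum _ fun i _ => norm_nonneg _).trans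
          (tsum_comp_le_tsum_of_inj hd (fun _ => norm_nonneg _) hshift)
  have hlim : Tendsto (fun n : ℕ => ‖f (x + n)‖ + T) atTop (𝓝 (0 + T)) := by
    refine (tendsto_norm_zero.comp (hf.comp ?_)).add_const T
    exact tendsto_atTop_add_const_left _ x tendsto_natCast_atTop_atTop
  simpa using ge_of_tendsto hlim (Eventually.of_forall hn)

theorem sq_norm_le_two_mul_sqrt_mul_sqrt (hφ : Summable fun x => ‖φ x‖) (x : ℤ) :
    ‖φ x‖ ^ 2 ≤ 2 * √(∑' y, ‖φ y‖ ^ 2) * √(∑' y, ‖φ (y + 1) - φ y‖ ^ 2) := by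
  have hφ2 := hφ.sq_of_nonneg fun y => norm_nonneg (φ y)
  have hφ2' : Summable fun y => ‖φ (y + 1)‖ ^ 2 := hφ2.comp_injective (add_left_injective 1)
  have hd : Summable fun y => ‖φ (y + 1) - φ y‖ :=
    ((hφ.comp_injective (add_left_injective 1)).add hφ).of_nonneg_of_le (fun _ => norm_nonneg _)
      fun y => norm_sub_le _ _
  have hd2 := hd.sq_of_nonneg fun _ => norm_nonneg _
  obtain ⟨hs₁, h₁⟩ := summable_and_tsum_mul_le_sqrt_mul_sqrt (fun _ => norm_nonneg _)
    (fun _ => norm_nonneg _) hφ2' hd2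
  obtain ⟨hs₂, h₂⟩ := summable_and_tsum_mul_le_sqrt_mul_sqrt (fun _ => norm_nonneg _)
    (fun _ => norm_nonneg _) hφ2 hd2
  have hshift : ∑' y, ‖φ (y + 1)‖ ^ 2 = ∑' y, ‖φ y‖ ^ 2 :=
    (Equiv.addRight 1).tsum_eq fun y => ‖φ y‖ ^ 2
  rw [hshift] at h₁
  have hpt : ∀ y, ‖‖φ (y + 1)‖ ^ 2 - ‖φ y‖ ^ 2‖ ≤
      ‖φ (y + 1)‖ * ‖φ (y + 1) - φ y‖ + ‖φ y‖ * ‖φ (y + 1) - φ y‖ := fun y => by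
    rw [sq_sub_sq, norm_mul, Real.norm_of_nonneg (by positivity), ← add_mul]
    gcongr
    exact abs_norm_sub_norm_le _ _
  have hsum := (hs₁.add hs₂).of_nonneg_of_le (fun _ => norm_nonneg _) hpt
  have htend : Tendsto (fun y => ‖φ y‖ ^ 2) atTop (𝓝 0) := by
    simpa using (hφ.tendsto_cofinite_zero.mono_left atTop_le_cofinite).pow 2
  calc ‖φ x‖ ^ 2 = ‖‖φ x‖ ^ 2‖ := (Real.norm_of_nonneg (by positivity)).symm
    _ ≤ ∑' y, ‖‖φ (y + 1)‖ ^ 2 - ‖φ y‖ ^ 2‖ :=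
      norm_le_tsum_norm_sub_of_tendsto_atTop htend hsum x
    _ ≤ ∑' y, (‖φ (y + 1)‖ * ‖φ (y + 1) - φ y‖ + ‖φ y‖ * ‖φ (y + 1) - φ y‖) :=
      hsum.tsum_le_tsum hpt (hs₁.add hs₂)
    _ ≤ _ := by rw [hs₁.tsum_add hs₂]; linarith

theorem tsum_sq_norm_le_two_mul_rpow (hφ : Summable fun x => ‖φ x‖) :
    ∑' x, ‖φ x‖ ^ 2 ≤
      2 * (∑' x, ‖φ x‖) ^ ((4 : ℝ) / 3) * (∑' x, ‖φ (x + 1) - φ x‖ ^ 2) ^ ((1 : ℝ) / 3) := by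
  set S := ∑' x, ‖φ x‖ ^ 2
  set A := ∑' x, ‖φ x‖
  set B := ∑' x, ‖φ (x + 1) - φ x‖ ^ 2
  have hSA : S ≤ √(2 * √S * √B) * A := tsum_sq_le_mul_tsum_of_le hφ (fun _ => norm_nonneg _)
    fun x => Real.le_sqrt_of_sq_le (sq_norm_le_two_mul_sqrt_mul_sqrt hφ x)
  have hS : 0 ≤ S := tsum_nonneg fun _ => by positivity
  refine le_two_mul_rpow_of_sq_le hS (tsum_nonneg fun _ => norm_nonneg _)
    (tsum_nonneg fun _ => by positivity) ?_
  calc S ^ 2 ≤ (√(2 * √S * √B) * A) ^ 2 := by gcongr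
    _ = 2 * √S * √B * A ^ 2 := by rw [mul_pow, Real.sq_sqrt (by positivity)]

end NashSobolev

/-- Discrete Nash–Sobolev inequality: there is a universal constant `C > 0` such that for
every absolutely summable `φ : ℤ → ℂ`,
`Σ |φ x|² ≤ C * (Σ |φ x|)^(4/3) * (Σ |φ (x+1) - φ x|²)^(1/3)`. -/
theorem discrete_nash_sobolev :
    ∃ C : ℝ, 0 < C ∧
      ∀ φ : ℤ → ℂ, Summable (fun x : ℤ => ‖φ x‖) →
        (∑' x : ℤ, ‖φ x‖ ^ 2) ≤
          C * (∑' x : ℤ, ‖φ x‖) ^ ((4 : ℝ) / 3) *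
            (∑' x : ℤ, ‖φ (x + 1) - φ x‖ ^ 2) ^ ((1 : ℝ) / 3) :=
  ⟨2, two_pos, fun _ => tsum_sq_norm_le_two_mul_rpow⟩
end

section
/- Exponential off-diagonal tail bound (equation (NashII4) in the proof of Proposition 3.9): for every κ > 0 there exists a constant C(κ) > 0, depending only on κ, such that for every heat kernel P as in the context, all 0 ≤ S ≤ T, all x ∈ ℤ, and all integers ℓ ≥ 1, Σ over w ∈ ℤ with |w − x| ≥ ℓ of P(S,T,x,w) is at most C(κ) · exp(−κ·ℓ/max(N·(T−S)^(1/2), 1)). -/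
/-!
Tilt the kernel by `w ↦ e^{μ(w-x)}`. This weight is an eigenfunction of the discrete Laplacian
with eigenvalue `2 (cosh μ - 1)`, so the forward equation and a summation by parts show that the
tilted mass `F t = ∑ w, e^{μ(w-x)} P(S,t,x,w)` satisfies `F' ≤ N² (cosh μ - 1) F`, using
`a ≤ 1`. Gronwall gives `F T ≤ exp (N² (T - S) (cosh μ - 1))`, which is bounded in terms of `κ`
alone for `μ = ±κ / max (N √(T - S)) 1`, and the Chernoff bound turns these two moments into the
tail estimate. Differentiating `F` termwise needs a summable majorant uniform in `t`; it comes
from Chapman–Kolmogorov together with the diagonal lower bound `P(t,T,x,x) ≥ e^{-N² (T - t)}`.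
-/

/-- The slow-bond coefficient field: `N^(-β⋆)` on the finite set `I`, and `1` elsewhere. -/
noncomputable def slowCoeff (N : ℕ) (βs : ℝ) (I : Finset ℤ) (x : ℤ) : ℝ :=
  if x ∈ I then (N : ℝ) ^ (-βs) else 1

/-- A heat kernel `P S T x y` for the coefficient field `a`, in the sense of the paper:
initial condition, the four Kolmogorov equations (forward/backward, acting in either
spatial variable), the Chapman–Kolmogorov identity, nonnegativity, and exponential
moment summability in both spatial variables. -/
structure IsHeatKernel (N : ℕ) (a : ℤ → ℝ) (P : ℝ → ℝ → ℤ → ℤ → ℝ) : Prop where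
  init : ∀ S : ℝ, 0 ≤ S → ∀ x y : ℤ, P S S x y = if x = y then 1 else 0
  forward_x : ∀ S T : ℝ, 0 ≤ S → S ≤ T → ∀ x y : ℤ,
    HasDerivAt (fun t => P S t x y)
      ((1 / 2) * (N : ℝ) ^ 2 * a x *
        (P S T (x + 1) y + P S T (x - 1) y - 2 * P S T x y)) T
  forward_y : ∀ S T : ℝ, 0 ≤ S → S ≤ T → ∀ x y : ℤ,
    HasDerivAt (fun t => P S t x y)
      ((1 / 2) * (N : ℝ) ^ 2 *
        (a (y + 1) * P S T x (y + 1) + a (y - 1) * P S T x (y - 1)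
          - 2 * a y * P S T x y)) T
  backward_x : ∀ S T : ℝ, 0 ≤ S → S ≤ T → ∀ x y : ℤ,
    HasDerivAt (fun s => P s T x y)
      (-((1 / 2) * (N : ℝ) ^ 2 * a x *
        (P S T (x + 1) y + P S T (x - 1) y - 2 * P S T x y))) S
  backward_y : ∀ S T : ℝ, 0 ≤ S → S ≤ T → ∀ x y : ℤ,
    HasDerivAt (fun s => P s T x y)
      (-((1 / 2) * (N : ℝ) ^ 2 *
        (a (y + 1) * P S T x (y + 1) + a (y - 1) * P S T x (y - 1)
          - 2 * a y * P S T x y))) S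
  chapman : ∀ S R T : ℝ, 0 ≤ S → S ≤ R → R ≤ T → ∀ x y : ℤ,
    P S T x y = ∑' w : ℤ, P R T x w * P S R w y
  nonneg : ∀ S T : ℝ, 0 ≤ S → S ≤ T → ∀ x y : ℤ, 0 ≤ P S T x y
  expSummable_y : ∀ lam : ℝ, 0 < lam → ∀ S T : ℝ, 0 ≤ S → S ≤ T → ∀ x : ℤ,
    Summable (fun y : ℤ => Real.exp (lam * |(y : ℝ)|) * P S T x y)
  expSummable_x : ∀ lam : ℝ, 0 < lam → ∀ S T : ℝ, 0 ≤ S → S ≤ T → ∀ y : ℤ,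
    Summable (fun x : ℤ => Real.exp (lam * |(x : ℝ)|) * P S T x y)

open Real Set Filter

noncomputable def kolmogorovForward (N : ℕ) (a f : ℤ → ℝ) (y : ℤ) : ℝ :=
  (1 / 2) * (N : ℝ) ^ 2 * (a (y + 1) * f (y + 1) + a (y - 1) * f (y - 1) - 2 * a y * f y)

lemma abs_kolmogorovForward_le {N : ℕ} {a f : ℤ → ℝ} (ha0 : ∀ z, 0 ≤ a z)
    (ha1 : ∀ z, a z ≤ 1) (hf : ∀ y, 0 ≤ f y) (y : ℤ) :
    |kolmogorovForward N a f y| ≤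
      (1 / 2) * (N : ℝ) ^ 2 * (f (y + 1) + f (y - 1) + 2 * f y) := by
  have h z : 0 ≤ a z * f z ∧ a z * f z ≤ f z :=
    ⟨mul_nonneg (ha0 z) (hf z), mul_le_of_le_one_left (hf z) (ha1 z)⟩
  rw [kolmogorovForward, abs_mul, abs_of_nonneg (by positivity)]
  gcongr
  rw [abs_le]
  constructor <;> linarith [h (y + 1), h (y - 1), h y]

noncomputable def expTilt (μ : ℝ) (x w : ℤ) : ℝ := exp (μ * ((w : ℝ) - x))

section Tilt

variable {μ : ℝ} {x : ℤ}

lemma expTilt_pos (w : ℤ) : 0 < expTilt μ x w := exp_pos _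

@[simp] lemma expTilt_self : expTilt μ x x = 1 := by simp [expTilt]

lemma expTilt_add (w j : ℤ) : expTilt μ x (w + j) = exp (μ * j) * expTilt μ x w := by
  rw [expTilt, expTilt, ← exp_add]; push_cast; ring_nf

lemma expTilt_add_one (w : ℤ) : expTilt μ x (w + 1) = exp μ * expTilt μ x w := by
  simpa using expTilt_add (μ := μ) (x := x) w 1

lemma expTilt_sub_one (w : ℤ) : expTilt μ x (w - 1) = exp (-μ) * expTilt μ x w := by
  simpa [← sub_eq_add_neg] using expTilt_add (μ := μ) (x := x) w (-1)

lemma exp_mul_abs_le_expTilt_add_expTilt_neg (lam : ℝ) (x w : ℤ) :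
    exp (lam * |(w : ℝ) - x|) ≤ expTilt lam x w + expTilt (-lam) x w := by
  unfold expTilt
  rcases abs_cases ((w : ℝ) - x) with ⟨h, -⟩ | ⟨h, -⟩
  · rw [h]; linarith [exp_pos (-lam * ((w : ℝ) - x))]
  · rw [h, mul_neg, ← neg_mul]; linarith [exp_pos (lam * ((w : ℝ) - x))]

lemma Summable.expTilt_mul_comp_add {g : ℤ → ℝ} (hg : Summable fun w => expTilt μ x w * g w)
    (j : ℤ) : Summable fun w => expTilt μ x w * g (w + j) := by
  have hshift : Summable fun w => expTilt μ x (w + j) * g (w + j) :=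
    (Equiv.addRight j).summable_iff.mpr hg
  refine (hshift.mul_left (exp (-(μ * j)))).congr fun w => ?_
  rw [expTilt_add, ← mul_assoc, ← mul_assoc, ← exp_add, neg_add_cancel, exp_zero, one_mul]

lemma Summable.expTilt_mul_comp_sub_one {g : ℤ → ℝ}
    (hg : Summable fun w => expTilt μ x w * g w) :
    Summable fun w => expTilt μ x w * g (w - 1) := by
  simpa [← sub_eq_add_neg] using hg.expTilt_mul_comp_add (-1)

lemma tsum_expTilt_mul_kolmogorovForward (N : ℕ) (a f : ℤ → ℝ)
    (hf : Summable fun w => expTilt μ x w * (a w * f w)) :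
    ∑' w, expTilt μ x w * kolmogorovForward N a f w =
      (N : ℝ) ^ 2 * (cosh μ - 1) * ∑' w, expTilt μ x w * (a w * f w) := by
  set g : ℤ → ℝ := fun w => expTilt μ x w * (a w * f w)
  have hpoint : ∀ w, expTilt μ x w * kolmogorovForward N a f w =
      (1 / 2) * (N : ℝ) ^ 2 * (exp (-μ) * g (w + 1) + exp μ * g (w - 1) - 2 * g w) := by
    intro w
    have hinv : exp (-μ) * exp μ = 1 := by rw [← exp_add, neg_add_cancel, exp_zero]
    simp only [g, kolmogorovForward, expTilt_add_one, expTilt_sub_one]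
    linear_combination (-1 / 2 * (N : ℝ) ^ 2 * expTilt μ x w *
      (a (w + 1) * f (w + 1) + a (w - 1) * f (w - 1))) * hinv
  have hplus : HasSum (fun w => g (w + 1)) (∑' w, g w) :=
    ((Equiv.addRight (1 : ℤ)).hasSum_iff (f := g)).mpr hf.hasSum
  have hminus : HasSum (fun w => g (w - 1)) (∑' w, g w) :=
    ((Equiv.subRight (1 : ℤ)).hasSum_iff (f := g)).mpr hf.hasSum
  rw [tsum_congr hpoint, ((((hplus.mul_left (exp (-μ))).add (hminus.mul_left (exp μ))).sub
    (hf.hasSum.mul_left 2)).mul_left _).tsum_eq, cosh_eq]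
  ring

end Tilt

lemma tsum_tail_le_exp_mul {p : ℤ → ℝ} (hp : ∀ w, 0 ≤ p w) (x ℓ : ℤ) {lam : ℝ}
    (hlam : 0 ≤ lam)
    (hplus : Summable fun w => expTilt lam x w * p w)
    (hminus : Summable fun w => expTilt (-lam) x w * p w) :
    ∑' w : {w : ℤ // ℓ ≤ |w - x|}, p w ≤
      exp (-(lam * ℓ)) * (∑' w, expTilt lam x w * p w + ∑' w, expTilt (-lam) x w * p w) := by
  set q : ℤ → ℝ := fun w => expTilt lam x w * p w + expTilt (-lam) x w * p w
  have hq : Summable q := hplus.add hminus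
  have hq0 : ∀ w, 0 ≤ q w := fun w =>
    add_nonneg (mul_nonneg (expTilt_pos w).le (hp w)) (mul_nonneg (expTilt_pos w).le (hp w))
  have hle : ∀ w : ℤ, exp (lam * |(w : ℝ) - x|) * p w ≤ q w := fun w => by
    simpa only [q, add_mul] using
      mul_le_mul_of_nonneg_right (exp_mul_abs_le_expTilt_add_expTilt_neg lam x w) (hp w)
  have hp_le : ∀ w, p w ≤ q w := fun w =>
    (le_mul_of_one_le_left (hp w) (one_le_exp (by positivity))).trans (hle w)
  have htail : ∀ w : {w : ℤ // ℓ ≤ |w - x|}, p w ≤ exp (-(lam * ℓ)) * q w := by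
    rintro ⟨w, hw⟩
    have hℓ : exp (lam * ℓ) ≤ exp (lam * |(w : ℝ) - x|) :=
      exp_le_exp.mpr (mul_le_mul_of_nonneg_left (by exact_mod_cast hw) hlam)
    calc p w = exp (-(lam * ℓ)) * (exp (lam * ℓ) * p w) := by
          rw [← mul_assoc, ← exp_add, neg_add_cancel, exp_zero, one_mul]
      _ ≤ exp (-(lam * ℓ)) * q w := by
          gcongr
          exact (mul_le_mul_of_nonneg_right hℓ (hp w)).trans (hle w)
  calc ∑' w : {w : ℤ // ℓ ≤ |w - x|}, p w ≤ ∑' w, exp (-(lam * ℓ)) * q w :=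
        Summable.tsum_le_tsum_of_inj Subtype.val Subtype.val_injective
          (fun w _ => mul_nonneg (exp_pos _).le (hq0 w)) htail
          ((hq.of_nonneg_of_le hp hp_le).subtype _) (hq.mul_left _)
    _ = _ := by rw [tsum_mul_left, hplus.tsum_add hminus]

lemma exp_mul_mul_le_of_mul_le_deriv {f f' : ℝ → ℝ} {a b c : ℝ} (hab : a ≤ b)
    (hf : ContinuousOn f (Icc a b)) (hf' : ∀ t ∈ Ioo a b, HasDerivAt f (f' t) t)
    (hbound : ∀ t ∈ Ioo a b, c * f t ≤ f' t) :
    exp (c * (b - a)) * f a ≤ f b := by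
  set g : ℝ → ℝ := fun t => exp (-(c * (t - a))) * f t
  have hg : ∀ t ∈ Ioo a b, HasDerivAt g (exp (-(c * (t - a))) * (f' t - c * f t)) t := by
    intro t ht
    have hexp : HasDerivAt (fun t => -(c * (t - a))) (-c) t := by
      simpa using ((((hasDerivAt_id t).sub_const a).const_mul c).const_mul (-1 : ℝ))
    exact (hexp.exp.mul (hf' t ht)).congr_deriv (by ring)
  have hmono : MonotoneOn g (Icc a b) := by
    refine monotoneOn_of_deriv_nonneg (convex_Icc a b)
      ((continuous_exp.comp (by fun_prop)).continuousOn.mul hf) (fun t ht => ?_) (fun t ht => ?_)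
      <;> rw [interior_Icc] at ht
    · exact (hg t ht).differentiableAt.differentiableWithinAt
    · rw [(hg t ht).deriv]
      exact mul_nonneg (exp_pos _).le (sub_nonneg.mpr (hbound t ht))
  have hgab := hmono (left_mem_Icc.mpr hab) (right_mem_Icc.mpr hab) hab
  simp only [g, sub_self, mul_zero, neg_zero, exp_zero, one_mul] at hgab
  calc exp (c * (b - a)) * f a ≤ exp (c * (b - a)) * (exp (-(c * (b - a))) * f b) := by
        gcongr
    _ = f b := by rw [← mul_assoc, ← exp_add, add_neg_cancel, exp_zero, one_mul]

lemma le_exp_mul_mul_of_deriv_le {f f' : ℝ → ℝ} {a b c : ℝ} (hab : a ≤ b)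
    (hf : ContinuousOn f (Icc a b)) (hf' : ∀ t ∈ Ioo a b, HasDerivAt f (f' t) t)
    (hbound : ∀ t ∈ Ioo a b, f' t ≤ c * f t) :
    f b ≤ exp (c * (b - a)) * f a := by
  have h := exp_mul_mul_le_of_mul_le_deriv (c := c) hab hf.neg (fun t ht => (hf' t ht).neg)
    (fun t ht => by simp only [Pi.neg_apply]; linarith [hbound t ht])
  simp only [Pi.neg_apply] at h
  linarith

lemma exp_sub_one_le_mul_exp (t : ℝ) : exp t - 1 ≤ t * exp t := by
  have hinv : exp (-t) * exp t = 1 := by rw [← exp_add, neg_add_cancel, exp_zero]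
  nlinarith [mul_le_mul_of_nonneg_right (add_one_le_exp (-t)) (exp_pos t).le]

lemma mul_cosh_sub_one_le {s μ κ : ℝ} (hs : 0 ≤ s) (hμ : μ ^ 2 ≤ κ ^ 2)
    (hsμ : s * μ ^ 2 ≤ κ ^ 2) :
    s * (cosh μ - 1) ≤ κ ^ 2 / 2 * exp (κ ^ 2 / 2) := by
  calc s * (cosh μ - 1) ≤ s * (μ ^ 2 / 2 * exp (μ ^ 2 / 2)) := by
        gcongr
        exact (sub_le_sub_right (cosh_le_exp_half_sq μ) 1).trans (exp_sub_one_le_mul_exp _)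
    _ = s * μ ^ 2 / 2 * exp (μ ^ 2 / 2) := by ring
    _ ≤ κ ^ 2 / 2 * exp (κ ^ 2 / 2) := by gcongr

lemma mul_sq_div_max_le {c s : ℝ} (hc : 0 ≤ c) (hs : 0 ≤ s) (κ : ℝ) :
    c ^ 2 * s * (κ / max (c * s ^ ((1 : ℝ) / 2)) 1) ^ 2 ≤ κ ^ 2 := by
  set M := max (c * s ^ ((1 : ℝ) / 2)) 1
  have hM : 0 < M := one_pos.trans_le (le_max_right _ _)
  have hcs : c ^ 2 * s ≤ M ^ 2 :=
    calc c ^ 2 * s = (c * s ^ ((1 : ℝ) / 2)) ^ 2 := by rw [mul_pow, ← sqrt_eq_rpow, sq_sqrt hs]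
      _ ≤ M ^ 2 := pow_le_pow_left₀ (by positivity) (le_max_left _ _) 2
  rw [div_pow, mul_div_assoc', div_le_iff₀ (by positivity)]
  nlinarith [mul_le_mul_of_nonneg_left hcs (sq_nonneg κ)]

lemma slowCoeff_nonneg (N : ℕ) (βs : ℝ) (I : Finset ℤ) (z : ℤ) : 0 ≤ slowCoeff N βs I z := by
  unfold slowCoeff
  split_ifs <;> positivity

lemma slowCoeff_le_one {N : ℕ} {βs : ℝ} (I : Finset ℤ) (hN : 1 ≤ N) (hβ : 0 ≤ βs) (z : ℤ) :
    slowCoeff N βs I z ≤ 1 := by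
  unfold slowCoeff
  split_ifs
  · exact rpow_le_one_of_one_le_of_nonpos (by exact_mod_cast hN) (neg_nonpos.mpr hβ)
  · exact le_rfl

namespace IsHeatKernel

variable {N : ℕ} {a : ℤ → ℝ} {P : ℝ → ℝ → ℤ → ℤ → ℝ} {S T : ℝ}

lemma summable_expTilt_mul (hP : IsHeatKernel N a P) (hS : 0 ≤ S) (hST : S ≤ T) (x : ℤ)
    (μ : ℝ) :
    Summable fun y => expTilt μ x y * P S T x y := by
  refine .of_nonneg_of_le (fun y => mul_nonneg (expTilt_pos y).le (hP.nonneg S T hS hST x y))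
    (fun y => ?_)
    ((hP.expSummable_y (|μ| + 1) (by positivity) S T hS hST x).mul_left (exp (|μ| * |(x : ℝ)|)))
  rw [← mul_assoc, ← exp_add, expTilt]
  gcongr
  · exact hP.nonneg S T hS hST x y
  · calc μ * ((y : ℝ) - x) ≤ |μ| * |(y : ℝ) - x| := (le_abs_self _).trans_eq (abs_mul _ _)
      _ ≤ |μ| * (|(y : ℝ)| + |(x : ℝ)|) := by gcongr; exact abs_sub _ _
      _ ≤ |μ| * |(x : ℝ)| + (|μ| + 1) * |(y : ℝ)| := by nlinarith [abs_nonneg (y : ℝ)]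

lemma summable_target (hP : IsHeatKernel N a P) (hS : 0 ≤ S) (hST : S ≤ T) (x : ℤ) :
    Summable fun y => P S T x y := by
  simpa [expTilt] using hP.summable_expTilt_mul hS hST x 0

lemma summable_source (hP : IsHeatKernel N a P) (hS : 0 ≤ S) (hST : S ≤ T) (y : ℤ) :
    Summable fun x => P S T x y :=
  (hP.expSummable_x 1 one_pos S T hS hST y).of_nonneg_of_le (fun x => hP.nonneg S T hS hST x y)
    fun x => le_mul_of_one_le_left (hP.nonneg S T hS hST x y) (one_le_exp (by positivity))

lemma exp_neg_mul_le_diag (hP : IsHeatKernel N a P) (ha0 : ∀ z, 0 ≤ a z) (ha1 : ∀ z, a z ≤ 1)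
    {t u : ℝ} (ht : 0 ≤ t) (htu : t ≤ u) (x : ℤ) :
    exp (-((N : ℝ) ^ 2 * (u - t))) ≤ P t u x x := by
  have h := exp_mul_mul_le_of_mul_le_deriv (c := -(N : ℝ) ^ 2) (f := fun v => P t v x x) htu
    (fun v hv => (hP.forward_x t v ht hv.1 x x).continuousAt.continuousWithinAt)
    (fun v hv => hP.forward_x t v ht hv.1.le x x)
    (fun v hv => by
      have hp := hP.nonneg t v ht hv.1.le
      have hN : (0 : ℝ) ≤ (N : ℝ) ^ 2 := sq_nonneg _
      nlinarith [mul_nonneg (mul_nonneg hN (ha0 x)) (add_nonneg (hp (x + 1) x) (hp (x - 1) x)),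
        mul_le_mul_of_nonneg_left (mul_le_of_le_one_left (hp x x) (ha1 x)) hN])
  simpa [hP.init t ht] using h

lemma le_exp_mul_of_le_time (hP : IsHeatKernel N a P) (ha0 : ∀ z, 0 ≤ a z) (ha1 : ∀ z, a z ≤ 1)
    {t : ℝ} (hS : 0 ≤ S) (hSt : S ≤ t) (htT : t ≤ T) (x y : ℤ) :
    P S t x y ≤ exp ((N : ℝ) ^ 2 * (T - t)) * P S T x y := by
  have ht : 0 ≤ t := hS.trans hSt
  have hsum : Summable fun w => P t T x w * P S t w y :=
    ((hP.summable_source hS hSt y).mul_left (∑' w, P t T x w)).of_nonneg_of_le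
      (fun w => mul_nonneg (hP.nonneg t T ht htT x w) (hP.nonneg S t hS hSt w y))
      (fun w => mul_le_mul_of_nonneg_right
        ((hP.summable_target ht htT x).le_tsum w fun w' _ => hP.nonneg t T ht htT x w')
        (hP.nonneg S t hS hSt w y))
  have hCK : P t T x x * P S t x y ≤ P S T x y := by
    rw [hP.chapman S t T hS hSt htT x y]
    exact hsum.le_tsum x fun w _ =>
      mul_nonneg (hP.nonneg t T ht htT x w) (hP.nonneg S t hS hSt w y)
  calc P S t x y
        = exp ((N : ℝ) ^ 2 * (T - t)) * (exp (-((N : ℝ) ^ 2 * (T - t))) * P S t x y) := by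
        rw [← mul_assoc, ← exp_add, add_neg_cancel, exp_zero, one_mul]
    _ ≤ exp ((N : ℝ) ^ 2 * (T - t)) * P S T x y := by
        gcongr
        exact (mul_le_mul_of_nonneg_right (hP.exp_neg_mul_le_diag ha0 ha1 ht htT x)
          (hP.nonneg S t hS hSt x y)).trans hCK

lemma tsum_expTilt_mul_init (hP : IsHeatKernel N a P) (hS : 0 ≤ S) (x : ℤ) (μ : ℝ) :
    ∑' w, expTilt μ x w * P S S x w = 1 := by
  rw [tsum_eq_single x fun w hw => by simp [hP.init S hS, Ne.symm hw]]
  simp [hP.init S hS]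

section Majorant

variable {x : ℤ} {K : ℝ}

lemma continuousOn_tsum_expTilt_mul (hP : IsHeatKernel N a P) (hS : 0 ≤ S) (hST : S ≤ T)
    (hdom : ∀ t ∈ Icc S T, ∀ y, P S t x y ≤ K * P S T x y) (μ : ℝ) :
    ContinuousOn (fun t => ∑' w, expTilt μ x w * P S t x w) (Icc S T) := by
  refine continuousOn_tsum (fun w t ht => ?_) ((hP.summable_expTilt_mul hS hST x μ).mul_left K)
    (fun w t ht => ?_)
  · exact ((hP.forward_y S t hS ht.1 x w).continuousAt.const_mul _).continuousWithinAt
  · rw [Real.norm_eq_abs,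
      abs_of_nonneg (mul_nonneg (expTilt_pos w).le (hP.nonneg S t hS ht.1 x w)), mul_left_comm]
    exact mul_le_mul_of_nonneg_left (hdom t ht w) (expTilt_pos w).le

lemma hasDerivAt_tsum_expTilt_mul (hP : IsHeatKernel N a P) (ha0 : ∀ z, 0 ≤ a z)
    (ha1 : ∀ z, a z ≤ 1) (hS : 0 ≤ S) (hdom : ∀ t ∈ Icc S T, ∀ y, P S t x y ≤ K * P S T x y)
    (μ : ℝ) {t : ℝ} (ht : t ∈ Ioo S T) :
    HasDerivAt (fun t => ∑' w, expTilt μ x w * P S t x w)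
      (∑' w, expTilt μ x w * kolmogorovForward N a (P S t x) w) t := by
  have hT := hP.summable_expTilt_mul hS (ht.1.trans ht.2).le x μ
  set u : ℤ → ℝ := fun w => (1 / 2) * (N : ℝ) ^ 2 * K * (expTilt μ x w * P S T x (w + 1) +
    expTilt μ x w * P S T x (w - 1) + 2 * (expTilt μ x w * P S T x w))
  have hu : Summable u := (((hT.expTilt_mul_comp_add 1).add hT.expTilt_mul_comp_sub_one).add
    (hT.mul_left 2)).mul_left _
  refine hasDerivAt_tsum_of_isPreconnected (g := fun w s => expTilt μ x w * P S s x w)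
    (g' := fun w s => expTilt μ x w * kolmogorovForward N a (P S s x) w) hu isOpen_Ioo
    isPreconnected_Ioo (fun w s hs => (hP.forward_y S s hS hs.1.le x w).const_mul _)
    (fun w s hs => ?_) ht (hP.summable_expTilt_mul hS ht.1.le x μ) ht
  have hs := Ioo_subset_Icc_self hs
  rw [norm_mul, Real.norm_eq_abs, Real.norm_eq_abs, abs_of_pos (expTilt_pos w)]
  calc expTilt μ x w * |kolmogorovForward N a (P S s x) w|
      ≤ expTilt μ x w * ((1 / 2) * (N : ℝ) ^ 2 *
          (P S s x (w + 1) + P S s x (w - 1) + 2 * P S s x w)) := by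
        exact mul_le_mul_of_nonneg_left
          (abs_kolmogorovForward_le ha0 ha1 (hP.nonneg S s hS hs.1 x) w) (expTilt_pos w).le
    _ ≤ expTilt μ x w * ((1 / 2) * (N : ℝ) ^ 2 *
          (K * P S T x (w + 1) + K * P S T x (w - 1) + 2 * (K * P S T x w))) := by
        refine mul_le_mul_of_nonneg_left ?_ (expTilt_pos w).le
        gcongr <;> exact hdom s hs _
    _ = u w := by ring

end Majorant

lemma tsum_expTilt_mul_le (hP : IsHeatKernel N a P) (ha0 : ∀ z, 0 ≤ a z) (ha1 : ∀ z, a z ≤ 1)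
    (hS : 0 ≤ S) (hST : S ≤ T) (x : ℤ) (μ : ℝ) :
    ∑' w, expTilt μ x w * P S T x w ≤ exp ((N : ℝ) ^ 2 * (cosh μ - 1) * (T - S)) := by
  have hdom : ∀ t ∈ Icc S T, ∀ y, P S t x y ≤ exp ((N : ℝ) ^ 2 * (T - S)) * P S T x y :=
    fun t ht y => (hP.le_exp_mul_of_le_time ha0 ha1 hS ht.1 ht.2 x y).trans <| by
      gcongr
      · exact hP.nonneg S T hS hST x y
      · exact ht.1
  have hgrowth : ∀ t ∈ Ioo S T, ∑' w, expTilt μ x w * kolmogorovForward N a (P S t x) w ≤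
      (N : ℝ) ^ 2 * (cosh μ - 1) * ∑' w, expTilt μ x w * P S t x w := by
    intro t ht
    have hsum := hP.summable_expTilt_mul hS ht.1.le x μ
    have hle : ∀ w, expTilt μ x w * (a w * P S t x w) ≤ expTilt μ x w * P S t x w := fun w =>
      mul_le_mul_of_nonneg_left (mul_le_of_le_one_left (hP.nonneg S t hS ht.1.le x w) (ha1 w))
        (expTilt_pos w).le
    have hsum' := hsum.of_nonneg_of_le (fun w => mul_nonneg (expTilt_pos w).le
      (mul_nonneg (ha0 w) (hP.nonneg S t hS ht.1.le x w))) hle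
    rw [tsum_expTilt_mul_kolmogorovForward N a _ hsum']
    have hcosh : 0 ≤ cosh μ - 1 := sub_nonneg.mpr (one_le_cosh μ)
    exact mul_le_mul_of_nonneg_left (hsum'.tsum_le_tsum hle hsum) (by positivity)
  have h := le_exp_mul_mul_of_deriv_le hST (hP.continuousOn_tsum_expTilt_mul hS hST hdom μ)
    (fun t ht => hP.hasDerivAt_tsum_expTilt_mul ha0 ha1 hS hdom μ ht) hgrowth
  rwa [hP.tsum_expTilt_mul_init hS, mul_one] at h

lemma tsum_expTilt_mul_le_of_sq_le (hP : IsHeatKernel N a P) (ha0 : ∀ z, 0 ≤ a z)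
    (ha1 : ∀ z, a z ≤ 1) (hS : 0 ≤ S) (hST : S ≤ T) (x : ℤ) {μ κ : ℝ} (hμ : μ ^ 2 ≤ κ ^ 2)
    (hNμ : (N : ℝ) ^ 2 * (T - S) * μ ^ 2 ≤ κ ^ 2) :
    ∑' w, expTilt μ x w * P S T x w ≤ exp (κ ^ 2 / 2 * exp (κ ^ 2 / 2)) :=
  (hP.tsum_expTilt_mul_le ha0 ha1 hS hST x μ).trans <| exp_le_exp.mpr <| by
    linarith [mul_cosh_sub_one_le (mul_nonneg (sq_nonneg (N : ℝ)) (sub_nonneg.mpr hST)) hμ hNμ]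

end IsHeatKernel

/-- Exponential off-diagonal tail bound (equation (NashII4)). -/
theorem exponential_offdiagonal_tail :
    ∀ κ : ℝ, 0 < κ → ∃ C : ℝ, 0 < C ∧
      ∀ (N : ℕ), 1 ≤ N → ∀ (βs : ℝ), 0 < βs → βs ≤ 1 / 2 →
      ∀ (I : Finset ℤ) (P : ℝ → ℝ → ℤ → ℤ → ℝ),
        IsHeatKernel N (slowCoeff N βs I) P →
        ∀ S T : ℝ, 0 ≤ S → S ≤ T → ∀ x : ℤ, ∀ ℓ : ℕ, 1 ≤ ℓ →
          (∑' w : {w : ℤ // (ℓ : ℤ) ≤ |w - x|}, P S T x (w : ℤ)) ≤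
            C * Real.exp (-(κ * (ℓ : ℝ)) /
              max ((N : ℝ) * (T - S) ^ ((1 : ℝ) / 2)) 1) := by
  intro κ hκ
  refine ⟨2 * exp (κ ^ 2 / 2 * exp (κ ^ 2 / 2)), by positivity, ?_⟩
  intro N hN βs hβ _ I P hP S T hS hST x ℓ _
  have ha0 := slowCoeff_nonneg N βs I
  have ha1 := slowCoeff_le_one I hN hβ.le
  set M := max ((N : ℝ) * (T - S) ^ ((1 : ℝ) / 2)) 1
  have hM : 0 < M := one_pos.trans_le (le_max_right _ _)
  have hmoment : ∀ μ, μ ^ 2 = (κ / M) ^ 2 →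
      ∑' w, expTilt μ x w * P S T x w ≤ exp (κ ^ 2 / 2 * exp (κ ^ 2 / 2)) := by
    intro μ hμ
    refine hP.tsum_expTilt_mul_le_of_sq_le ha0 ha1 hS hST x ?_ ?_ <;> rw [hμ]
    · exact pow_le_pow_left₀ (by positivity) (div_le_self hκ.le (le_max_right _ _)) 2
    · exact mul_sq_div_max_le (Nat.cast_nonneg N) (sub_nonneg.mpr hST) κ
  calc _ ≤ exp (-(κ / M * ((ℓ : ℤ) : ℝ))) * (∑' w, expTilt (κ / M) x w * P S T x w +
        ∑' w, expTilt (-(κ / M)) x w * P S T x w) :=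
        tsum_tail_le_exp_mul (hP.nonneg S T hS hST x) x ℓ (by positivity)
          (hP.summable_expTilt_mul hS hST x _) (hP.summable_expTilt_mul hS hST x _)
    _ ≤ exp (-(κ / M * ((ℓ : ℤ) : ℝ))) * (2 * exp (κ ^ 2 / 2 * exp (κ ^ 2 / 2))) := by
        gcongr
        linarith [hmoment _ rfl, hmoment (-(κ / M)) (neg_sq _)]
    _ = _ := by
        rw [Int.cast_natCast, show -(κ / M * ℓ) = -(κ * ℓ) / M by ring]
        ring
end

section
/- Azuma-type estimate for the canonical ensemble (equation (2BEstimate5) in the proof of Proposition 4.6): there exists a universal constant C > 0 such that for every finite index set I, every integer ℓ ≥ 1, every choice of 2ℓ pairwise distinct elements a₁, …, a_ℓ, b₁, …, b_ℓ ∈ I, and every integer k with |k| ≤ |I|, k ≡ |I| (mod 2) (so that the slice below is nonempty), the canonical ensemble μ_k satisfies E_{μ_k}[ | (1/ℓ)·Σ_{j=1}^{ℓ} (η(a_j) − η(b_j)) | ] ≤ C · ℓ^(−1/2). -/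
/-!
A transposition of two sites `x, y` preserves every canonical slice and changes the sign of
`(η x - η y) * η c` whenever `c ∉ {x, y}`. Hence the increments `η (a j) - η (b j)` are
pairwise orthogonal in `L²(μ_k)`, each with second moment at most `4`, so their sum has second
moment at most `4ℓ`, and Cauchy–Schwarz bounds the first absolute moment of their mean by
`2 / √ℓ`.
-/

/-- The spin value (`±1` as a real number) of a configuration `η : α → Bool` at site `i`. -/
def spin {α : Type} (η : α → Bool) (i : α) : ℝ := if η i then 1 else -1

open Finset

/-- `μ_k` is the uniform measure on this set. -/
def canonicalSlice (α : Type) [Fintype α] [DecidableEq α] (k : ℤ) : Finset (α → Bool) :=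
  {η | ∑ i, (if η i then (1 : ℤ) else -1) = k}

lemma comp_perm_mem_canonicalSlice {α : Type} [Fintype α] [DecidableEq α] {k : ℤ}
    {η : α → Bool} (hη : η ∈ canonicalSlice α k) (σ : Equiv.Perm α) :
    η ∘ σ ∈ canonicalSlice α k := by
  simp only [canonicalSlice, mem_filter, mem_univ, true_and, Function.comp_apply] at hη ⊢
  rwa [Equiv.sum_comp σ (fun i => if η i then (1 : ℤ) else -1)]

lemma sq_spin_sub_spin_le {α : Type} (η : α → Bool) (x y : α) :
    (spin η x - spin η y) ^ 2 ≤ 4 := by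
  unfold spin
  split_ifs <;> norm_num

lemma sum_spin_sub_spin_mul_spin_eq_zero {α : Type} [DecidableEq α] {S : Finset (α → Bool)}
    {x y c : α} (hS : ∀ η ∈ S, η ∘ Equiv.swap x y ∈ S) (hcx : c ≠ x) (hcy : c ≠ y) :
    ∑ η ∈ S, (spin η x - spin η y) * spin η c = 0 := by
  have hswap : ∑ η ∈ S, (spin η x - spin η y) * spin η c =
      ∑ η ∈ S, -((spin η x - spin η y) * spin η c) := by
    refine sum_nbij' (· ∘ Equiv.swap x y) (· ∘ Equiv.swap x y) hS hS
      (fun η _ => by ext; simp) (fun η _ => by ext; simp) fun η _ => ?_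
    simp only [spin, Function.comp_apply, Equiv.swap_apply_left, Equiv.swap_apply_right,
      Equiv.swap_apply_of_ne_of_ne hcx hcy]
    ring
  rw [sum_neg_distrib] at hswap
  linarith

lemma sum_sq_sum_of_orthogonal {β ι R : Type*} [CommSemiring R] [DecidableEq ι]
    (S : Finset β) (T : Finset ι) (f : ι → β → R)
    (horth : ∀ i ∈ T, ∀ j ∈ T, i ≠ j → ∑ x ∈ S, f i x * f j x = 0) :
    ∑ x ∈ S, (∑ i ∈ T, f i x) ^ 2 = ∑ i ∈ T, ∑ x ∈ S, f i x ^ 2 := by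
  simp_rw [sq, sum_mul_sum]
  rw [sum_comm]
  refine sum_congr rfl fun i hi => ?_
  rw [sum_comm, sum_eq_single_of_mem i hi fun j hj hji => horth i hi j hj hji.symm]

lemma sum_sq_sum_spin_sub_spin_le {α ι : Type} [Fintype ι] [DecidableEq α]
    {S : Finset (α → Bool)} (hS : ∀ x y, ∀ η ∈ S, η ∘ Equiv.swap x y ∈ S)
    {a b : ι → α} (hab : Function.Injective (Sum.elim a b)) :
    ∑ η ∈ S, (∑ j, (spin η (a j) - spin η (b j))) ^ 2 ≤ 4 * Fintype.card ι * #S := by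
  classical
  obtain ⟨ha, hb, hab⟩ := Sum.elim_injective.1 hab
  have horth : ∀ i ∈ univ, ∀ j ∈ univ, i ≠ j →
      ∑ η ∈ S, (spin η (a i) - spin η (b i)) * (spin η (a j) - spin η (b j)) = 0 := by
    intro i _ j _ hij
    simp_rw [mul_sub, sum_sub_distrib]
    rw [sum_spin_sub_spin_mul_spin_eq_zero (hS _ _) (ha.ne hij.symm) (hab j i),
      sum_spin_sub_spin_mul_spin_eq_zero (hS _ _) (hab i j).symm (hb.ne hij.symm), sub_zero]
  rw [sum_sq_sum_of_orthogonal S univ _ horth]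
  calc ∑ j, ∑ η ∈ S, (spin η (a j) - spin η (b j)) ^ 2
      ≤ ∑ _j : ι, ∑ _η ∈ S, (4 : ℝ) :=
        sum_le_sum fun j _ => sum_le_sum fun η _ => sq_spin_sub_spin_le η _ _
    _ = 4 * Fintype.card ι * #S := by
        simp only [sum_const, card_univ, nsmul_eq_mul]
        ring

lemma inv_card_mul_sum_abs_le_of_sum_sq_le {β : Type*} {S : Finset β} {f : β → ℝ} {M : ℝ}
    (hM : 0 ≤ M) (hf : ∑ x ∈ S, f x ^ 2 ≤ M ^ 2 * #S) :
    (#S : ℝ)⁻¹ * ∑ x ∈ S, |f x| ≤ M := by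
  rcases S.eq_empty_or_nonempty with rfl | hS
  · simpa using hM
  have hcard : (0 : ℝ) < #S := by exact_mod_cast hS.card_pos
  have hsq : (∑ x ∈ S, |f x|) ^ 2 ≤ (M * #S) ^ 2 :=
    calc (∑ x ∈ S, |f x|) ^ 2 ≤ #S * ∑ x ∈ S, |f x| ^ 2 := sq_sum_le_card_mul_sum_sq
      _ ≤ #S * (M ^ 2 * #S) := by simpa only [sq_abs] using by gcongr
      _ = (M * #S) ^ 2 := by ring
  rw [inv_mul_le_iff₀ hcard, mul_comm]
  exact (pow_le_pow_iff_left₀ (sum_nonneg fun _ _ => abs_nonneg _) (by positivity)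
    two_ne_zero).1 hsq

lemma inv_mul_sqrt_eq_rpow {x : ℝ} (hx : 0 < x) : x⁻¹ * √x = x ^ (-(1 : ℝ) / 2) := by
  rw [neg_div, Real.rpow_neg hx.le, ← Real.sqrt_eq_rpow]
  field_simp
  rw [Real.sq_sqrt hx.le]

/-- Azuma-type estimate for the canonical ensemble (equation (2BEstimate5)): the uniform
measure on configurations `η : α → {±1}` with total spin `k` satisfies
`E[ |ℓ⁻¹ Σ_j (η(a_j) - η(b_j))| ] ≤ C ℓ^(-1/2)` for pairwise distinct sites
`a₁,…,a_ℓ,b₁,…,b_ℓ`, with a universal constant `C`. -/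
theorem canonical_ensemble_azuma :
    ∃ C : ℝ, 0 < C ∧
      ∀ (α : Type) [Fintype α] [DecidableEq α],
      ∀ ℓ : ℕ, 1 ≤ ℓ →
      ∀ a b : Fin ℓ → α, Function.Injective (Sum.elim a b) →
      ∀ k : ℤ, |k| ≤ (Fintype.card α : ℤ) → k % 2 = (Fintype.card α : ℤ) % 2 →
        (((Finset.univ.filter
              (fun η : α → Bool =>
                (∑ i : α, (if η i then (1 : ℤ) else -1)) = k)).card : ℝ))⁻¹ *
          ∑ η ∈ Finset.univ.filter
              (fun η : α → Bool =>
                (∑ i : α, (if η i then (1 : ℤ) else -1)) = k),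
            |(ℓ : ℝ)⁻¹ * ∑ j : Fin ℓ, (spin η (a j) - spin η (b j))| ≤
          C * (ℓ : ℝ) ^ (-(1 : ℝ) / 2) := by
  refine ⟨2, two_pos, fun α _ _ ℓ hℓ a b hab k _ _ => ?_⟩
  change (#(canonicalSlice α k) : ℝ)⁻¹ * ∑ η ∈ canonicalSlice α k, _ ≤ _
  have hℓ : (0 : ℝ) < ℓ := by exact_mod_cast hℓ
  have hsecond := sum_sq_sum_spin_sub_spin_le (S := canonicalSlice α k)
    (fun x y η hη => comp_perm_mem_canonicalSlice hη _) hab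
  have hmean : (#(canonicalSlice α k) : ℝ)⁻¹ *
      ∑ η ∈ canonicalSlice α k, |∑ j, (spin η (a j) - spin η (b j))| ≤ 2 * √ℓ := by
    refine inv_card_mul_sum_abs_le_of_sum_sq_le (by positivity) ?_
    rw [Fintype.card_fin] at hsecond
    rwa [mul_pow, Real.sq_sqrt hℓ.le, show (2 : ℝ) ^ 2 = 4 by norm_num]
  calc _ = (ℓ : ℝ)⁻¹ * ((#(canonicalSlice α k) : ℝ)⁻¹ *
        ∑ η ∈ canonicalSlice α k, |∑ j, (spin η (a j) - spin η (b j))|) := by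
        simp only [abs_mul, abs_inv, Nat.abs_cast, ← mul_sum]
        ring
    _ ≤ (ℓ : ℝ)⁻¹ * (2 * √ℓ) := by gcongr
    _ = 2 * (ℓ : ℝ) ^ (-(1 : ℝ) / 2) := by rw [mul_left_comm, inv_mul_sqrt_eq_rpow hℓ]
end
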